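/- arXiv:math/0309331 — 6 statements merged into one kernel-verified Lean document; each statement's English description precedes it below -/
import Mathlib

section
/- For the complete graph K_4, the total number of integral k-flows equals (2k−1)(2k²−2k+1) for every integer k ≥ 1. -/
private lemma vec6eval (a b c d e f : ℤ) :
    ![a,b,c,d,e,f] 0 = a ∧ ![a,b,c,d,e,f] 1 = b ∧ ![a,b,c,d,e,f] 2 = c ∧
    ![a,b,c,d,e,f] 3 = d ∧ ![a,b,c,d,e,f] 4 = e ∧ ![a,b,c,d,e,f] 5 = f :=
  ⟨rfl, rfl, rfl, rfl, rfl, rfl⟩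

private lemma vec6_0 (a b c d e f : ℤ) : ![a,b,c,d,e,f] 0 = a := rfl
private lemma vec6_1 (a b c d e f : ℤ) : ![a,b,c,d,e,f] 1 = b := rfl
private lemma vec6_2 (a b c d e f : ℤ) : ![a,b,c,d,e,f] 2 = c := rfl
private lemma vec6_3 (a b c d e f : ℤ) : ![a,b,c,d,e,f] 3 = d := rfl
private lemma vec6_4 (a b c d e f : ℤ) : ![a,b,c,d,e,f] 4 = e := rfl
private lemma vec6_5 (a b c d e f : ℤ) : ![a,b,c,d,e,f] 5 = f := rfl
private lemma vec4_0 (a b c d : ℤ) : ![a,b,c,d] 0 = a := rfl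
private lemma vec4_1 (a b c d : ℤ) : ![a,b,c,d] 1 = b := rfl
private lemma vec4_2 (a b c d : ℤ) : ![a,b,c,d] 2 = c := rfl
private lemma vec4_3 (a b c d : ℤ) : ![a,b,c,d] 3 = d := rfl

/-- For the complete graph `K₄`, the total number of integral `k`-flows equals
`(2k-1)(2k²-2k+1)`. -/
theorem stmt_4 (k : ℤ) (hk : 1 ≤ k) :
    (Set.ncard {x : Fin 6 → ℤ |
        (∀ i, |x i| < k) ∧
        x 0 + x 1 + x 2 = 0 ∧ x 0 = x 3 + x 4 ∧
        x 1 + x 3 = x 5 ∧ x 2 + x 4 + x 5 = 0} : ℤ)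
      = (2 * k - 1) * (2 * k ^ 2 - 2 * k + 1) := by
  classical
  set F : (Fin 4 → ℤ) → (Fin 6 → ℤ) :=
    fun u => ![u 0 - u 2, u 3 - u 0, u 2 - u 3, u 0 - u 1, u 1 - u 2, u 3 - u 1] with hF
  set T : Set (Fin 4 → ℤ) := {u | (∀ i, 0 ≤ u i ∧ u i ≤ k - 1) ∧ ∃ i, u i = 0} with hT
  have hST : {x : Fin 6 → ℤ |
        (∀ i, |x i| < k) ∧
        x 0 + x 1 + x 2 = 0 ∧ x 0 = x 3 + x 4 ∧
        x 1 + x 3 = x 5 ∧ x 2 + x 4 + x 5 = 0} = F '' T := by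
    ext x
    simp only [Set.mem_setOf_eq, Set.mem_image, hT, hF]
    constructor
    · rintro ⟨hb, h1, h2, h3, h4⟩
      have b0 := abs_lt.mp (hb 0)
      have b1 := abs_lt.mp (hb 1)
      have b2 := abs_lt.mp (hb 2)
      have b3 := abs_lt.mp (hb 3)
      have b4 := abs_lt.mp (hb 4)
      have b5 := abs_lt.mp (hb 5)
      set m := min (min (x 0) (x 4)) (min 0 (-(x 2))) with hm
      have hm4 : m = x 0 ∨ m = x 4 ∨ m = 0 ∨ m = -(x 2) := by omega
      refine ⟨![x 0 - m, x 4 - m, 0 - m, -(x 2) - m], ⟨fun i => ?_, ?_⟩, ?_⟩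
      · fin_cases i <;> simp [vec6_0, vec6_1, vec6_2, vec6_3, vec6_4, vec6_5, vec4_0, vec4_1, vec4_2, vec4_3] <;> omega
      · rcases hm4 with h | h | h | h
        · exact ⟨0, by simp; omega⟩
        · exact ⟨1, by simp; omega⟩
        · exact ⟨2, by simp; omega⟩
        · exact ⟨3, by simp; omega⟩
      · funext i
        fin_cases i <;> simp [vec6_0, vec6_1, vec6_2, vec6_3, vec6_4, vec6_5, vec4_0, vec4_1, vec4_2, vec4_3] <;> omega
    · rintro ⟨u, ⟨hu, i, hi⟩, rfl⟩
      have n0 := hu 0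
      have n1 := hu 1
      have n2 := hu 2
      have n3 := hu 3
      refine ⟨fun j => ?_, ?_, ?_, ?_, ?_⟩
      · rw [abs_lt]
        fin_cases j <;> simp [vec6_0, vec6_1, vec6_2, vec6_3, vec6_4, vec6_5, vec4_0, vec4_1, vec4_2, vec4_3] <;> omega
      · simp only [hF, vec6_0, vec6_1, vec6_2, vec6_3, vec6_4, vec6_5, vec4_0, vec4_1, vec4_2, vec4_3]; omega
      · simp only [hF, vec6_0, vec6_1, vec6_2, vec6_3, vec6_4, vec6_5, vec4_0, vec4_1, vec4_2, vec4_3]; omega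
      · simp only [hF, vec6_0, vec6_1, vec6_2, vec6_3, vec6_4, vec6_5, vec4_0, vec4_1, vec4_2, vec4_3]; omega
      · simp only [hF, vec6_0, vec6_1, vec6_2, vec6_3, vec6_4, vec6_5, vec4_0, vec4_1, vec4_2, vec4_3]; omega
  have hinj : Set.InjOn F T := by
    rintro u ⟨hu, i, hi⟩ u' ⟨hu', j, hj⟩ h
    have e0 := congrFun h 0
    have e1 := congrFun h 1
    have e2 := congrFun h 2
    have e3 := congrFun h 3
    have e4 := congrFun h 4
    have e5 := congrFun h 5
    simp only [hF, Matrix.cons_val_zero, Matrix.cons_val_one, Matrix.head_cons,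
      Matrix.cons_val_two, Matrix.cons_val_three, Matrix.tail_cons, Matrix.cons_val',
      Matrix.empty_val', Matrix.cons_val_fin_one, Fin.isValue] at e0 e1 e2 e3 e4 e5
    have n0 := hu 0; have n1 := hu 1; have n2 := hu 2; have n3 := hu 3
    have m0 := hu' 0; have m1 := hu' 1; have m2 := hu' 2; have m3 := hu' 3
    have zi : u 0 = 0 ∨ u 1 = 0 ∨ u 2 = 0 ∨ u 3 = 0 := by
      fin_cases i
      exacts [Or.inl hi, Or.inr (Or.inl hi), Or.inr (Or.inr (Or.inl hi)),
        Or.inr (Or.inr (Or.inr hi))]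
    have zj : u' 0 = 0 ∨ u' 1 = 0 ∨ u' 2 = 0 ∨ u' 3 = 0 := by
      fin_cases j
      exacts [Or.inl hj, Or.inr (Or.inl hj), Or.inr (Or.inr (Or.inl hj)),
        Or.inr (Or.inr (Or.inr hj))]
    have hq : u 0 = u' 0 ∧ u 1 = u' 1 ∧ u 2 = u' 2 ∧ u 3 = u' 3 := by omega
    funext r
    fin_cases r
    exacts [hq.1, hq.2.1, hq.2.2.1, hq.2.2.2]
  rw [hST, Set.ncard_image_of_injOn hinj]
  have hTfin : T = ↑((Fintype.piFinset fun _ : Fin 4 => Finset.Icc (0:ℤ) (k-1)).filter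
      fun u => ∃ i, u i = 0) := by
    ext u
    simp [hT, Fintype.mem_piFinset, Finset.mem_Icc, and_comm]
  rw [hTfin, Set.ncard_coe_finset]
  clear hST hinj hTfin hF hT F T
  have hneg : (Fintype.piFinset fun _ : Fin 4 => Finset.Icc (0:ℤ) (k-1)).filter
      (fun u => ¬ ∃ i, u i = 0) = Fintype.piFinset fun _ : Fin 4 => Finset.Icc (1:ℤ) (k-1) := by
    ext u
    simp only [Finset.mem_filter, Fintype.mem_piFinset, Finset.mem_Icc, not_exists]
    constructor
    · rintro ⟨hbox, hne⟩ i
      have := hbox i; have := hne i; omega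
    · intro hbox
      exact ⟨fun i => by have := hbox i; omega, fun i => by have := hbox i; omega⟩
  have c1 : (Fintype.piFinset fun _ : Fin 4 => Finset.Icc (0:ℤ) (k-1)).card = k.toNat ^ 4 := by
    rw [Fintype.card_piFinset]
    simp [Int.card_Icc]
  have c2 : (Fintype.piFinset fun _ : Fin 4 => Finset.Icc (1:ℤ) (k-1)).card
      = (k.toNat - 1) ^ 4 := by
    rw [Fintype.card_piFinset]
    simp only [Int.card_Icc]
    have : (k - 1 + 1 - 1).toNat = k.toNat - 1 := by omega
    rw [this, Finset.prod_const]
    simp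
  have h1 : 1 ≤ k.toNat := by omega
  have hle : (k.toNat - 1) ^ 4 ≤ k.toNat ^ 4 := Nat.pow_le_pow_left (by omega) 4
  have hk' : ((k.toNat : ℤ)) = k := by omega
  have hsplit := Finset.card_filter_add_card_filter_not
    (s := Fintype.piFinset fun _ : Fin 4 => Finset.Icc (0:ℤ) (k-1))
    (p := fun u => ∃ i, u i = 0)
  rw [hneg, c1, c2] at hsplit
  rw [Nat.eq_sub_of_add_eq hsplit]
  push_cast [Nat.cast_sub hle, Nat.cast_sub h1]
  rw [hk']
  ring
end

section
/- A finite multigraph Γ admits a nowhere-zero real-valued flow if and only if it admits a nowhere-zero integer-valued flow. -/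
open Finset Matrix

/-- Fredholm alternative over ℚ: if every kernel element of `M` vanishes at `e`,
then `Pi.single e 1` is in the row space of `M`. -/
lemma fredholm_aux {V E : Type} [Fintype V] [Fintype E] [DecidableEq V] [DecidableEq E]
    (M : Matrix V E ℚ) (e : E)
    (h : ∀ s : E → ℚ, M.mulVec s = 0 → s e = 0) :
    ∃ w : V → ℚ, Mᵀ.mulVec w = Pi.single e 1 := by
  by_contra hc
  push_neg at hc
  have hnm : (Pi.single e 1 : E → ℚ) ∉ LinearMap.range (Mᵀ.mulVecLin) := by
    rintro ⟨w, hw⟩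
    exact hc w hw
  obtain ⟨f, hf0, hfbot⟩ :=
    Submodule.exists_dual_map_eq_bot_of_notMem hnm inferInstance
  set z : E → ℚ := fun i => f (fun j => if i = j then 1 else 0) with hz_def
  have hker : ∀ w : V → ℚ, f (Mᵀ.mulVec w) = 0 := by
    intro w
    have : f (Mᵀ.mulVec w) ∈ (LinearMap.range (Mᵀ.mulVecLin)).map f :=
      Submodule.mem_map_of_mem ⟨w, rfl⟩
    rw [hfbot] at this
    simpa using this
  have hz : M.mulVec z = 0 := by
    funext v
    have h1 : Mᵀ.mulVec (Pi.single v 1) = fun i => M v i := by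
      rw [Matrix.mulVec_single_one]
      rfl
    have h2 : f (fun i => M v i) = 0 := by rw [← h1]; exact hker _
    have h3 : f (fun i => M v i) = ∑ i, M v i * z i := by
      rw [LinearMap.pi_apply_eq_sum_univ f (fun i => M v i)]
      simp [hz_def, smul_eq_mul]
    simp only [Matrix.mulVec, dotProduct, Pi.zero_apply]
    rw [← h3, h2]
  have hze : z e = 0 := h z hz
  apply hf0
  have : (Pi.single e 1 : E → ℚ) = fun j => if e = j then 1 else 0 := by
    funext j
    simp [Pi.single_apply, eq_comm]
  rw [this]
  exact hze

lemma sum_coeff_aux {V E : Type} [Fintype E] [DecidableEq V] {K : Type} [CommRing K]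
    (head tail : E → V) (v : V) (y : E → K) :
    ∑ i, ((if head i = v then (1:K) else 0) - if tail i = v then 1 else 0) * y i
      = (∑ e ∈ Finset.univ.filter (fun e => head e = v), y e)
        - ∑ e ∈ Finset.univ.filter (fun e => tail e = v), y e := by
  rw [Finset.sum_filter, Finset.sum_filter, ← Finset.sum_sub_distrib]
  exact Finset.sum_congr rfl fun i _ => by split_ifs <;> ring

/-- A finite multigraph admits a nowhere-zero real-valued flow iff it admits a
nowhere-zero integer-valued flow. -/
theorem stmt_12 (V E : Type) [Fintype V] [Fintype E] [DecidableEq V]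
    (head tail : E → V) :
    (∃ x : E → ℝ, (∀ e, x e ≠ 0) ∧ ∀ v : V,
        ∑ e ∈ Finset.univ.filter (fun e => head e = v), x e
          = ∑ e ∈ Finset.univ.filter (fun e => tail e = v), x e) ↔
      (∃ x : E → ℤ, (∀ e, x e ≠ 0) ∧ ∀ v : V,
        ∑ e ∈ Finset.univ.filter (fun e => head e = v), x e
          = ∑ e ∈ Finset.univ.filter (fun e => tail e = v), x e) := by
  classical
  constructor
  · rintro ⟨x, hx0, hxc⟩
    set M : Matrix V E ℚ :=
      fun v e => (if head e = v then 1 else 0) - (if tail e = v then 1 else 0) with hM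
    set S : Submodule ℚ (E → ℚ) := LinearMap.ker M.mulVecLin with hS
    -- conservation of x in coefficient form
    have hxM : ∀ v, ∑ i, ((M v i : ℚ) : ℝ) * x i = 0 := by
      intro v
      have hcast : ∀ i, ((M v i : ℚ) : ℝ)
          = (if head i = v then (1:ℝ) else 0) - (if tail i = v then 1 else 0) := by
        intro i
        simp only [hM]
        split_ifs <;> norm_num
      calc ∑ i, ((M v i : ℚ) : ℝ) * x i
          = ∑ i, ((if head i = v then (1:ℝ) else 0) - (if tail i = v then 1 else 0)) * x i :=
            Finset.sum_congr rfl fun i _ => by rw [hcast]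
        _ = 0 := by rw [sum_coeff_aux head tail v x, hxc v, sub_self]
    -- for each edge, some rational flow is nonzero there
    have key : ∀ e : E, ∃ s : E → ℚ, s ∈ S ∧ s e ≠ 0 := by
      intro e
      by_contra hcon
      push_neg at hcon
      obtain ⟨w, hw⟩ := fredholm_aux M e (fun s hs => hcon s (by simpa [hS] using hs) )
      have hrow : ∀ i, ∑ v, M v i * w v = (Pi.single e 1 : E → ℚ) i := by
        intro i
        have := congrFun hw i
        simpa [Matrix.mulVec, dotProduct, Matrix.transpose_apply] using this
      have hxe : x e = 0 := by
        have h1 : x e = ∑ i, (((Pi.single e 1 : E → ℚ) i : ℚ) : ℝ) * x i := by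
          simp [Pi.single_apply, apply_ite (fun q : ℚ => (q : ℝ))]
        rw [h1]
        calc ∑ i, (((Pi.single e 1 : E → ℚ) i : ℚ) : ℝ) * x i
            = ∑ i, ∑ v, (w v : ℝ) * (((M v i : ℚ) : ℝ) * x i) := by
              refine Finset.sum_congr rfl fun i _ => ?_
              rw [← hrow i]
              push_cast
              rw [Finset.sum_mul]
              exact Finset.sum_congr rfl fun v _ => by ring
          _ = ∑ v, (w v : ℝ) * ∑ i, ((M v i : ℚ) : ℝ) * x i := by
              rw [Finset.sum_comm]
              exact Finset.sum_congr rfl fun v _ => by rw [Finset.mul_sum]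
          _ = 0 := by simp [hxM]
      exact hx0 e hxe
    -- not a finite union of proper subspaces
    have hptop : ∀ e : E,
        (LinearMap.ker ((LinearMap.proj e).comp S.subtype) : Subspace ℚ S) ≠ ⊤ := by
      intro e htop
      obtain ⟨s, hsS, hse⟩ := key e
      have : (⟨s, hsS⟩ : S) ∈ (⊤ : Subspace ℚ S) := trivial
      rw [← htop] at this
      exact hse (by simpa using this)
    have hne : (⋃ e : E,
        ((LinearMap.ker ((LinearMap.proj e).comp S.subtype) : Subspace ℚ S) : Set S))
        ≠ Set.univ := by
      intro hu
      obtain ⟨e, he⟩ := Subspace.exists_eq_top_of_iUnion_eq_univ hu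
      exact hptop e he
    obtain ⟨σ, hσ⟩ := Set.ne_univ_iff_exists_notMem _ |>.1 hne
    set s : E → ℚ := (σ : E → ℚ) with hs_def
    have hs0 : ∀ e, s e ≠ 0 := by
      intro e he
      exact hσ (Set.mem_iUnion.2 ⟨e, by simpa [LinearMap.mem_ker] using he⟩)
    have hsS : M.mulVec s = 0 := σ.2
    -- conservation for s
    have hsc : ∀ v, (∑ e ∈ Finset.univ.filter (fun e => head e = v), s e)
        = ∑ e ∈ Finset.univ.filter (fun e => tail e = v), s e := by
      intro v
      have h0 : ∑ i, M v i * s i = 0 := congrFun hsS v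
      rw [← sub_eq_zero, ← sum_coeff_aux head tail v s]
      simpa [hM] using h0
    -- clear denominators
    set N : ℕ := ∏ e, (s e).den with hN
    have hNne : (N : ℚ) ≠ 0 := by
      simp only [hN]
      push_cast
      exact Finset.prod_ne_zero_iff.2 fun e _ => by exact_mod_cast (s e).den_nz
    have hnum : ∀ e : E, ((s e).num : ℚ) = s e * (s e).den := by
      intro e
      have hd : ((s e).den : ℚ) ≠ 0 := by exact_mod_cast (s e).den_nz
      exact (Rat.mul_den_eq_num (s e)).symm
    have hint : ∀ e : E, ∃ m : ℤ, (m : ℚ) = (N : ℚ) * s e := by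
      intro e
      obtain ⟨k, hk⟩ := Finset.dvd_prod_of_mem (fun e => (s e).den) (Finset.mem_univ e)
      refine ⟨(s e).num * k, ?_⟩
      rw [← hN] at hk
      push_cast [hk, hnum e]
      ring
    choose z hz using hint
    refine ⟨z, fun e he => ?_, fun v => ?_⟩
    · have : ((z e : ℤ) : ℚ) = 0 := by exact_mod_cast he
      rw [hz e] at this
      exact hs0 e ((mul_eq_zero.1 this).resolve_left hNne)
    · have h1 : ∀ F : Finset E, ((∑ e ∈ F, z e : ℤ) : ℚ) = (N : ℚ) * ∑ e ∈ F, s e := by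
        intro F
        push_cast
        rw [Finset.mul_sum]
        exact Finset.sum_congr rfl fun e _ => hz e
      have : ((∑ e ∈ Finset.univ.filter (fun e => head e = v), z e : ℤ) : ℚ)
          = ((∑ e ∈ Finset.univ.filter (fun e => tail e = v), z e : ℤ) : ℚ) := by
        rw [h1, h1, hsc v]
      exact_mod_cast this
  · rintro ⟨x, hx0, hxc⟩
    refine ⟨fun e => (x e : ℝ), fun e => Int.cast_ne_zero.2 (hx0 e), fun v => ?_⟩
    beta_reduce
    exact_mod_cast hxc v
end

section
/- Let Σ be the signed graph with a single vertex and two negative loops e, f, with both loop-ends oriented inward, so that flows are pairs (x(e), x(f)) with 2x(e) + 2x(f) = 0. Then for any abelian group A of odd order k, the number of nowhere-zero A-flows equals k − 1, while for A = ℤ/4ℤ it equals 5 and for A = ℤ/2ℤ × ℤ/2ℤ it equals 9. -/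
/-- For the signed graph with one vertex and two negative loops (flows are pairs
`(a,b)` with `2a + 2b = 0`): for any abelian group of odd order `k` the number of
nowhere-zero flows is `k - 1`, while for `ℤ/4` it is `5` and for `ℤ/2 × ℤ/2` it
is `9`. -/
theorem stmt_13 :
    (∀ (k : ℕ) (A : Type) [AddCommGroup A] [Fintype A],
      Odd k → Fintype.card A = k →
      Nat.card {p : A × A | 2 • p.1 + 2 • p.2 = 0 ∧ p.1 ≠ 0 ∧ p.2 ≠ 0} = k - 1) ∧
    Nat.card {p : ZMod 4 × ZMod 4 |
        2 • p.1 + 2 • p.2 = 0 ∧ p.1 ≠ 0 ∧ p.2 ≠ 0} = 5 ∧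
    Nat.card {p : (ZMod 2 × ZMod 2) × (ZMod 2 × ZMod 2) |
        2 • p.1 + 2 • p.2 = 0 ∧ p.1 ≠ 0 ∧ p.2 ≠ 0} = 9 := by
  refine ⟨?_, ?_, ?_⟩
  · intro k A _ _ hk hA
    classical
    have h2 : ∀ x : A, 2 • x = 0 → x = 0 := by
      intro x hx
      have h1 : addOrderOf x ∣ 2 := addOrderOf_dvd_of_nsmul_eq_zero hx
      have h2' : addOrderOf x ∣ k := hA ▸ addOrderOf_dvd_card
      have : addOrderOf x ∣ Nat.gcd 2 k := Nat.dvd_gcd h1 h2'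
      have hg : Nat.gcd 2 k = 1 := Nat.Coprime.gcd_eq_one (Nat.coprime_two_left.mpr hk)
      rw [hg, Nat.dvd_one] at this
      have hx1 : addOrderOf x • x = 0 := addOrderOf_nsmul_eq_zero x
      rw [this] at hx1; simpa using hx1
    have e : {p : A × A | 2 • p.1 + 2 • p.2 = 0 ∧ p.1 ≠ 0 ∧ p.2 ≠ 0} ≃
        {a : A // a ≠ 0} := by
      refine ⟨fun p => ⟨p.1.1, p.2.2.1⟩, fun a => ⟨(a.1, -a.1), ?_, a.2, neg_ne_zero.mpr a.2⟩,
        ?_, fun a => rfl⟩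
      · show 2 • (a.1 : A) + 2 • (-a.1) = 0
        simp
      · rintro ⟨⟨a, b⟩, hab, ha, hb⟩
        have : 2 • (a + b) = 0 := by rw [smul_add]; exact hab
        have hab' : a + b = 0 := h2 _ this
        have : b = -a := by linear_combination (norm := abel) hab'
        simp [Subtype.ext_iff, this]
    rw [Nat.card_congr e, Nat.card_eq_fintype_card, ← hA]
    simp [Fintype.card_subtype_compl]
  · rw [Nat.card_eq_fintype_card]; decide
  · rw [Nat.card_eq_fintype_card]; decide
end

section
/- Let Η be the incidence matrix of a signed graph Σ (each column has entries summing, with signs, according to edge type: a column for a link has two nonzero entries ±1, for a halfedge one entry ±1, for a negative loop one entry ±2). Then every vertex of the polytope P = Null(Η) ∩ [−1,1]^E, and more generally every vertex of the inside-out polytope (P, coordinate hyperplanes restricted to Null(Η)), is half-integral: all its coordinates lie in (1/2)ℤ. -/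
/-- The flow polytope `P = Null(Η) ∩ [-1,1]^E` of a signed graph given by its
incidence matrix `H` (columns indexed by edges). -/
def sgPolytope {V E : Type} [Fintype E] (H : E → V → ℤ) : Set (E → ℝ) :=
  {y | (∀ v : V, ∑ e, (H e v : ℝ) * y e = 0) ∧ ∀ e, |y e| ≤ 1}

section Core
variable {V : Type} [DecidableEq V]

def IsCol (h : V → ℤ) : Prop :=
  (∃ u v : V, ∃ a b : ℤ, u ≠ v ∧ (a = 1 ∨ a = -1) ∧ (b = 1 ∨ b = -1) ∧
    h = fun w => (if w = u then a else 0) + (if w = v then b else 0)) ∨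
  (∃ u : V, ∃ c : ℤ, (c = 1 ∨ c = -1 ∨ c = 2 ∨ c = -2) ∧
    h = fun w => if w = u then c else 0) ∨
  h = fun _ => 0

lemma isCol_zeroRow (v : V) (h : V → ℤ) (hc : IsCol h) :
    IsCol (fun u => if u = v then 0 else h u) := by
  rcases hc with ⟨u₀, v₀, a, b, huv, ha, hb, rfl⟩ | ⟨u₀, c, hc, rfl⟩ | rfl
  · by_cases h₁ : u₀ = v
    · subst h₁
      right; left
      exact ⟨v₀, b, by tauto, by
        funext u
        by_cases h2 : u = u₀ <;> by_cases h3 : u = v₀ <;> simp_all⟩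
    · by_cases h₂ : v₀ = v
      · subst h₂
        right; left
        exact ⟨u₀, a, by tauto, by
          funext u
          by_cases h2 : u = u₀ <;> by_cases h3 : u = v₀ <;> simp_all⟩
      · left
        exact ⟨u₀, v₀, a, b, huv, ha, hb, by
          funext u
          by_cases h2 : u = v
          · subst h2; simp [Ne.symm h₁, Ne.symm h₂]
          · simp [h2]⟩
  · by_cases h₁ : u₀ = v
    · subst h₁
      right; right
      funext u
      by_cases h2 : u = u₀ <;> simp_all
    · right; left
      exact ⟨u₀, c, hc, by
        funext u
        by_cases h2 : u = v
        · subst h2; simp [Ne.symm h₁]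
        · simp [h2]⟩
  · right; right
    funext u
    by_cases h2 : u = v <;> simp
end Core


section Core2
variable {V : Type} [DecidableEq V]

lemma unit_mul (a b : ℤ) (ha : a = 1 ∨ a = -1) (hb : b = 1 ∨ b = -1) :
    a * b = 1 ∨ a * b = -1 := by rcases ha with rfl|rfl <;> rcases hb with rfl|rfl <;> norm_num

lemma isCol_elim (v w : V) (hwv : w ≠ v) (b b' : ℤ) (hb : b = 1 ∨ b = -1)
    (hb' : b' = 1 ∨ b' = -1) (h : V → ℤ) (hc : IsCol h) :
    IsCol (fun u => if u = v then 0 else h u - h v * b * (if u = w then b' else 0)) := by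
  by_cases hv : h v = 0
  · have heq : (fun u => if u = v then 0 else h u - h v * b * (if u = w then b' else 0))
        = fun u => if u = v then 0 else h u := by
      funext u; rw [hv]; ring_nf
    rw [heq]; exact isCol_zeroRow v h hc
  rcases hc with ⟨u₀, v₀, a, b₀, huv, ha, hb₀, rfl⟩ | ⟨u₀, c, hcc, rfl⟩ | rfl
  · -- link column
    by_cases h₁ : v = u₀
    · obtain rfl : v = u₀ := h₁
      have hne : ¬ (v = v₀) := huv
      by_cases h₂ : v₀ = w
      · obtain rfl : w = v₀ := h₂.symm
        have hk : b₀ - a * b * b' = 0 ∨ b₀ - a * b * b' = 2 ∨ b₀ - a * b * b' = -2 := by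
          rcases ha with rfl|rfl <;> rcases hb with rfl|rfl <;> rcases hb' with rfl|rfl <;>
            rcases hb₀ with rfl|rfl <;> norm_num
        rcases hk with hk | hk
        · right; right
          funext u
          by_cases h3 : u = v
          · simp [h3]
          · by_cases h4 : u = w <;> simp [h3, h4, hne, hwv] <;> (try intro _) <;> linear_combination hk
        · right; left
          refine ⟨w, b₀ - a * b * b', by tauto, ?_⟩
          funext u
          by_cases h3 : u = v
          · subst h3; simp [Ne.symm hwv, hne]
          · by_cases h4 : u = w <;> simp [h3, h4, hne, hwv] <;> (try intro _) <;> try linear_combination hk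
      · left
        have hu : a * b * b' = 1 ∨ a * b * b' = -1 :=
          unit_mul (a*b) b' (unit_mul a b ha hb) hb'
        refine ⟨v₀, w, b₀, -(a * b * b'), fun hh => h₂ hh, hb₀, ?_, ?_⟩
        · rcases hu with hx|hx <;> rw [hx] <;> norm_num
        · funext u
          by_cases h3 : u = v <;> by_cases h4 : u = v₀ <;> by_cases h5 : u = w <;>
            simp_all <;> try linear_combination
    · by_cases h₂ : v = v₀
      · obtain rfl : v = v₀ := h₂
        have hne : ¬ (v = u₀) := h₁
        by_cases h₃ : u₀ = w
        · obtain rfl : w = u₀ := h₃.symm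
          have hk : a - b₀ * b * b' = 0 ∨ a - b₀ * b * b' = 2 ∨ a - b₀ * b * b' = -2 := by
            rcases ha with rfl|rfl <;> rcases hb with rfl|rfl <;> rcases hb' with rfl|rfl <;>
              rcases hb₀ with rfl|rfl <;> norm_num
          rcases hk with hk | hk
          · right; right
            funext u
            by_cases h3 : u = v
            · simp [h3]
            · by_cases h4 : u = w <;> simp [h3, h4, hne, hwv] <;> (try intro _) <;> linear_combination hk
          · right; left
            refine ⟨w, a - b₀ * b * b', by tauto, ?_⟩
            funext u
            by_cases h3 : u = v
            · subst h3; simp [Ne.symm hwv, hne]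
            · by_cases h4 : u = w <;> simp [h3, h4, hne, hwv] <;> (try intro _) <;> try linear_combination hk
        · left
          have hu : b₀ * b * b' = 1 ∨ b₀ * b * b' = -1 :=
            unit_mul (b₀*b) b' (unit_mul b₀ b hb₀ hb) hb'
          refine ⟨u₀, w, a, -(b₀ * b * b'), fun hh => h₃ hh, ha, ?_, ?_⟩
          · rcases hu with hx|hx <;> rw [hx] <;> norm_num
          · funext u
            by_cases h3 : u = v <;> by_cases h4 : u = u₀ <;> by_cases h5 : u = w <;>
              simp_all <;> try linear_combination
      · exfalso; apply hv; simp [h₁, h₂]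
  · -- single column
    have h₁ : v = u₀ := by
      by_contra hh; apply hv; simp [hh]
    obtain rfl : v = u₀ := h₁
    right; left
    refine ⟨w, -(c * b * b'), by
      rcases hcc with rfl|rfl|rfl|rfl <;> rcases hb with rfl|rfl <;> rcases hb' with rfl|rfl <;>
        norm_num, ?_⟩
    funext u
    by_cases h3 : u = v
    · subst h3; simp [Ne.symm hwv]
    · by_cases h4 : u = w <;> simp [h3, h4, hwv] <;> try linear_combination
  · simp at hv
end Core2

section Core3
variable {V E : Type} [Fintype V] [DecidableEq V] [DecidableEq E]

lemma sum_int_of_int (S : Finset E) (k : E → ℤ) (r : E → ℝ)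
    (h : ∀ e ∈ S, ∃ m : ℤ, r e = m) :
    ∃ m : ℤ, ∑ e ∈ S, (k e : ℝ) * r e = (m : ℝ) := by
  classical
  induction S using Finset.induction with
  | empty => exact ⟨0, by simp⟩
  | insert a S' ha ih =>
    obtain ⟨m, hm⟩ := ih (fun e he => h e (Finset.mem_insert_of_mem he))
    obtain ⟨m₀, hm₀⟩ := h a (Finset.mem_insert_self _ _)
    exact ⟨k a * m₀ + m, by rw [Finset.sum_insert ha, hm, hm₀]; push_cast; ring⟩

lemma core (n : ℕ) : ∀ (S : Finset E) (H : E → V → ℤ) (y : E → ℝ) (c : V → ℤ),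
    S.card ≤ n →
    (∀ e ∈ S, IsCol (H e)) →
    (∀ d : E → ℝ, (∀ e, e ∉ S → d e = 0) →
      (∀ v : V, ∑ e ∈ S, (H e v : ℝ) * d e = 0) → ∀ e, d e = 0) →
    (∀ v : V, ∑ e ∈ S, (H e v : ℝ) * y e = (c v : ℝ)) →
    ∀ e ∈ S, ∃ m : ℤ, 2 * y e = (m : ℝ) := by
  induction n with
  | zero =>
    intro S H y c hcard _ _ _ e he
    rw [Nat.le_zero, Finset.card_eq_zero] at hcard
    subst hcard; simp at he
  | succ n ih =>
    intro S H y c hcard htype hinj heq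
    by_cases hA : ∃ f ∈ S, ∃ v : V, H f v = 1 ∨ H f v = -1
    · obtain ⟨f, hf, v, hb⟩ := hA
      have hb2 : (H f v : ℝ) * (H f v : ℝ) = 1 := by
        rcases hb with h|h <;> rw [h] <;> norm_num
      have hshape : (∀ u, u ≠ v → H f u = 0) ∨
          (∃ w b', w ≠ v ∧ (b' = 1 ∨ b' = -1) ∧
            ∀ u, u ≠ v → H f u = if u = w then b' else 0) := by
        rcases htype f hf with ⟨u₀, v₀, a, b₀, huv, ha, hb₀, hfe⟩ | ⟨u₀, c₀, hc₀, hfe⟩ | hfe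
        · by_cases h₁ : v = u₀
          · obtain rfl : v = u₀ := h₁
            right
            exact ⟨v₀, b₀, Ne.symm huv, hb₀, fun u hu => by rw [hfe]; simp [hu]⟩
          · by_cases h₂ : v = v₀
            · obtain rfl : v = v₀ := h₂
              right
              refine ⟨u₀, a, fun hh => h₁ hh.symm, ha, fun u hu => by rw [hfe]; simp [hu]⟩
            · exfalso; rw [hfe] at hb; simp [h₁, h₂] at hb
        · by_cases h₁ : v = u₀
          · obtain rfl : v = u₀ := h₁
            left; intro u hu; rw [hfe]; simp [hu]
          · exfalso; rw [hfe] at hb; simp [h₁] at hb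
        · exfalso; rw [hfe] at hb; simp at hb
      have hcard' : (S.erase f).card ≤ n := by
        have := Finset.card_erase_of_mem hf
        omega
      have htype' : ∀ g ∈ S.erase f,
          IsCol (fun u => if u = v then 0 else H g u - H g v * H f v * H f u) := by
        intro g hg
        have hcg := htype g (Finset.mem_of_mem_erase hg)
        rcases hshape with hz | ⟨w, b', hwv, hb', hk⟩
        · have hrw : (fun u => if u = v then 0 else H g u - H g v * H f v * H f u)
              = fun u => if u = v then 0 else H g u := by
            funext u
            by_cases hu : u = v
            · simp [hu]
            · simp [hu, hz u hu]
          rw [hrw]; exact isCol_zeroRow v _ hcg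
        · have hrw : (fun u => if u = v then 0 else H g u - H g v * H f v * H f u)
              = fun u => if u = v then 0 else
                  H g u - H g v * H f v * (if u = w then b' else 0) := by
            funext u
            by_cases hu : u = v
            · simp [hu]
            · simp only [if_neg hu, hk u hu]
          rw [hrw]
          exact isCol_elim v w hwv (H f v) b' hb hb' _ hcg
      have hinj' : ∀ d : E → ℝ, (∀ e, e ∉ S.erase f → d e = 0) →
          (∀ u : V, ∑ g ∈ S.erase f,
            (((if u = v then 0 else H g u - H g v * H f v * H f u : ℤ)) : ℝ) * d g = 0) →
          ∀ e, d e = 0 := by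
        intro d' hsupp hrows
        have hd := hinj
          (fun g => if g = f then -(H f v : ℝ) * ∑ g ∈ S.erase f, (H g v : ℝ) * d' g else d' g)
          (fun e heS => by
            have hef : e ≠ f := fun hh => heS (hh ▸ hf)
            simp only [if_neg hef]
            exact hsupp e (fun hmem => heS (Finset.mem_of_mem_erase hmem)))
          (fun u => by
            rw [← Finset.sum_erase_add _ _ hf]
            rw [Finset.sum_congr rfl (fun g hg => by
              simp only [if_neg (Finset.mem_erase.mp hg).1] :
                ∀ g ∈ S.erase f, (H g u : ℝ) *
                  (if g = f then -(H f v : ℝ) * ∑ g ∈ S.erase f, (H g v : ℝ) * d' g else d' g)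
                  = (H g u : ℝ) * d' g)]
            simp only [eq_self_iff_true, ite_true]
            by_cases hu : u = v
            · rw [hu]
              linear_combination (-(∑ g ∈ S.erase f, (H g v : ℝ) * d' g)) * hb2
            · have hr := hrows u
              simp only [if_neg hu] at hr
              push_cast at hr
              have expand : ∑ g ∈ S.erase f, ((H g u : ℝ) - (H g v : ℝ) * (H f v : ℝ) * (H f u : ℝ)) * d' g
                  = ∑ g ∈ S.erase f, (H g u : ℝ) * d' g
                    - (H f v : ℝ) * (H f u : ℝ) * ∑ g ∈ S.erase f, (H g v : ℝ) * d' g := by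
                rw [Finset.mul_sum, ← Finset.sum_sub_distrib]
                exact Finset.sum_congr rfl (fun g hg => by ring)
              rw [expand] at hr
              linear_combination hr)
        intro e
        by_cases hef : e = f
        · rw [hef]; exact hsupp f (Finset.notMem_erase f S)
        · have := hd e
          simp only [if_neg hef] at this
          exact this
      have heq' : ∀ u : V, ∑ g ∈ S.erase f,
          (((if u = v then 0 else H g u - H g v * H f v * H f u : ℤ)) : ℝ) * y g
          = (((if u = v then 0 else c u - c v * H f v * H f u : ℤ)) : ℝ) := by
        intro u
        by_cases hu : u = v
        · simp [hu]
        · simp only [if_neg hu]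
          push_cast
          have h1 := heq u
          have h2 := heq v
          rw [← Finset.sum_erase_add _ _ hf] at h1 h2
          have expand : ∑ g ∈ S.erase f, ((H g u : ℝ) - (H g v : ℝ) * (H f v : ℝ) * (H f u : ℝ)) * y g
              = ∑ g ∈ S.erase f, (H g u : ℝ) * y g
                - (H f v : ℝ) * (H f u : ℝ) * ∑ g ∈ S.erase f, (H g v : ℝ) * y g := by
            rw [Finset.mul_sum, ← Finset.sum_sub_distrib]
            exact Finset.sum_congr rfl (fun g hg => by ring)
          rw [expand]
          linear_combination h1 - (H f v : ℝ) * (H f u : ℝ) * h2 + ((H f u : ℝ) * y f) * hb2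
      have hhalf := ih (S.erase f)
        (fun g u => if u = v then 0 else H g u - H g v * H f v * H f u) y
        (fun u => if u = v then 0 else c u - c v * H f v * H f u)
        hcard' htype' hinj' heq'
      intro e he
      by_cases hef : e = f
      · obtain ⟨m, hm⟩ := sum_int_of_int (S.erase f) (fun g => H g v) (fun g => 2 * y g) hhalf
        have h2 := heq v
        rw [← Finset.sum_erase_add _ _ hf] at h2
        have hs : ∑ g ∈ S.erase f, (H g v : ℝ) * (2 * y g)
            = 2 * ∑ g ∈ S.erase f, (H g v : ℝ) * y g := by
          rw [Finset.mul_sum]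
          exact Finset.sum_congr rfl (fun g _ => by ring)
        rw [hs] at hm
        refine ⟨H f v * (2 * c v - m), ?_⟩
        rw [hef]
        push_cast
        rcases hb with h|h <;> rw [h] at h2 ⊢ <;> push_cast at h2 ⊢ <;> linarith
      · exact hhalf e (Finset.mem_erase.mpr ⟨hef, he⟩)
    · -- Case B : all columns are zero or single ±2
      push_neg at hA
      have hall : ∀ g ∈ S, ∃ u₁ : V, ∃ c₁ : ℤ, (c₁ = 2 ∨ c₁ = -2) ∧
          H g = fun w => if w = u₁ then c₁ else 0 := by
        intro g hg
        rcases htype g hg with ⟨u₀, v₀, a, b₀, huv, ha, hb₀, hfe⟩ | ⟨u₀, c₀, hc₀, hfe⟩ | hfe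
        · exfalso
          have hval : H g u₀ = a := by rw [hfe]; simp [huv]
          have h2 := hA g hg u₀
          omega
        · rcases hc₀ with rfl|rfl|rfl|rfl
          · have hval : H g u₀ = 1 := by rw [hfe]; simp
            have h2 := hA g hg u₀; omega
          · have hval : H g u₀ = -1 := by rw [hfe]; simp
            have h2 := hA g hg u₀; omega
          · exact ⟨u₀, 2, Or.inl rfl, hfe⟩
          · exact ⟨u₀, -2, Or.inr rfl, hfe⟩
        · exfalso
          have hd := hinj (fun h => if h = g then 1 else 0)
            (fun e he => by simp; intro h; subst h; exact absurd hg he)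
            (fun v => by
              rw [Finset.sum_eq_single_of_mem g hg (fun b hb hbg => by simp [hbg])]
              simp [hfe])
            g
          simp at hd
      intro e he
      obtain ⟨u₀, c₀, hc₀, hfe⟩ := hall e he
      have hzero : ∀ g ∈ S, g ≠ e → (H g u₀ : ℝ) * y g = 0 := by
        intro g hg hge
        obtain ⟨u₁, c₁, hc₁, hfg⟩ := hall g hg
        by_cases hu : u₀ = u₁
        · exfalso
          subst hu
          have hd := hinj (fun h => if h = e then (c₁ : ℝ) else if h = g then -(c₀ : ℝ) else 0)
            (fun h hh => by
              split_ifs with h1 h2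
              · exact absurd (h1 ▸ he) hh
              · exact absurd (h2 ▸ hg) hh
              · rfl)
            (fun v => by
              rw [← Finset.sum_erase_add _ _ hg,
                ← Finset.sum_erase_add _ _ (Finset.mem_erase.mpr ⟨Ne.symm hge, he⟩)]
              rw [Finset.sum_eq_zero (fun h hh => by
                have h1 : h ≠ e := (Finset.mem_erase.mp hh).1
                have h2 : h ≠ g := (Finset.mem_erase.mp (Finset.mem_erase.mp hh).2).1
                simp [h1, h2])]
              rw [hfe, hfg]
              by_cases hv : v = u₀ <;> simp [hv, hge] <;> ring)
            e
          simp at hd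
          rcases hc₁ with rfl|rfl <;> norm_num at hd
        · rw [hfg]; simp [hu]
      have := heq u₀
      rw [Finset.sum_eq_single_of_mem e he (fun g hg hge => hzero g hg hge)] at this
      rw [hfe] at this
      simp at this
      rcases hc₀ with rfl|rfl
      · exact ⟨c u₀, by push_cast at this ⊢; linarith⟩
      · exact ⟨-c u₀, by push_cast at this ⊢; linarith⟩
end Core3

section Main
variable {V E : Type} [Fintype V] [Fintype E] [DecidableEq V] [DecidableEq E]

lemma perturb_zero (A : Set (E → ℝ)) (x : E → ℝ) (hx : x ∈ Set.extremePoints ℝ A)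
    (d : E → ℝ) (t : ℝ) (ht : 0 < t) (h₁ : x + t • d ∈ A) (h₂ : x - t • d ∈ A) : d = 0 := by
  obtain ⟨hxA, hext⟩ := hx
  have hseg : x ∈ openSegment ℝ (x - t • d) (x + t • d) := by
    refine ⟨1/2, 1/2, by norm_num, by norm_num, by norm_num, ?_⟩
    funext e
    simp [Pi.smul_apply, smul_eq_mul]
    ring
  have h1 : x - t • d = x := hext h₂ h₁ hseg
  funext e
  have := congrFun h1 e
  simp only [Pi.sub_apply, Pi.smul_apply, smul_eq_mul] at this
  have htd : t * d e = 0 := by linarith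
  have := mul_eq_zero.mp htd
  rcases this with h|h
  · exact absurd h (ne_of_gt ht)
  · exact h

lemma cube_mem (H : E → V → ℤ) (x d : E → ℝ) (t : ℝ) (hx : x ∈ sgPolytope H)
    (hrow : ∀ v, ∑ e, (H e v : ℝ) * d e = 0)
    (hstep : ∀ e, |t * d e| ≤ 1 - |x e|) : x + t • d ∈ sgPolytope H := by
  obtain ⟨hx1, hx2⟩ := hx
  constructor
  · intro v
    have : ∑ e, (H e v : ℝ) * (x e + t * d e)
        = ∑ e, (H e v : ℝ) * x e + t * ∑ e, (H e v : ℝ) * d e := by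
      rw [Finset.mul_sum, ← Finset.sum_add_distrib]
      exact Finset.sum_congr rfl (fun e _ => by ring)
    simp only [Pi.add_apply, Pi.smul_apply, smul_eq_mul]
    rw [this, hx1 v, hrow v]
    ring
  · intro e
    simp only [Pi.add_apply, Pi.smul_apply, smul_eq_mul]
    calc |x e + t * d e| ≤ |x e| + |t * d e| := abs_add_le _ _
    _ ≤ |x e| + (1 - |x e|) := by linarith [hstep e]
    _ = 1 := by ring

end Main


/-- Every vertex of the polytope `P = Null(Η) ∩ [-1,1]^E` of a signed graph, and more
generally every vertex of the inside-out polytope obtained by cutting `P` along the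
coordinate hyperplanes (equivalently, every extreme point of the closure of any
region, given by a sign vector `ε`), is half-integral. -/
theorem stmt_16 (V E : Type) [Fintype V] [Fintype E] [DecidableEq V] (H : E → V → ℤ)
    (hcol : ∀ e : E,
      (∃ u v : V, ∃ a b : ℤ, u ≠ v ∧ (a = 1 ∨ a = -1) ∧ (b = 1 ∨ b = -1) ∧
        H e = fun w => (if w = u then a else 0) + (if w = v then b else 0)) ∨
      (∃ u : V, ∃ c : ℤ, (c = 1 ∨ c = -1 ∨ c = 2 ∨ c = -2) ∧
        H e = fun w => if w = u then c else 0) ∨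
      H e = fun _ => 0)
    (x : E → ℝ)
    (hx : x ∈ Set.extremePoints ℝ (sgPolytope H) ∨
      ∃ ε : E → ℝ, (∀ e, ε e = 1 ∨ ε e = -1) ∧
        x ∈ Set.extremePoints ℝ (sgPolytope H ∩ {y | ∀ e, 0 ≤ ε e * y e})) :
    ∀ e : E, ∃ m : ℤ, 2 * x e = (m : ℝ) := by
  classical
  set S : Finset E := Finset.univ.filter (fun e => x e ≠ 1 ∧ x e ≠ -1 ∧ x e ≠ 0) with hS
  have hmemS : ∀ e, e ∈ S ↔ (x e ≠ 1 ∧ x e ≠ -1 ∧ x e ≠ 0) := by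
    intro e; simp [hS]
  have hxP : x ∈ sgPolytope H := by
    rcases hx with h | ⟨ε, hε, h⟩
    · exact h.1
    · exact h.1.1
  obtain ⟨hrow0, hcube0⟩ := hxP
  set mE : E → ℤ := fun e => if x e = 1 then 1 else if x e = -1 then -1 else 0 with hmEdef
  have hoff : ∀ e, e ∉ S → x e = (mE e : ℝ) := by
    intro e he
    rw [hmemS] at he
    by_cases h1 : x e = 1
    · simp [hmEdef, h1]
    · by_cases h2 : x e = -1
      · simp [hmEdef, h1, h2]
      · have h3 : x e = 0 := by tauto
        simp [hmEdef, h1, h2, h3]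
  set c : V → ℤ := fun v =>
    -∑ e ∈ Finset.univ.filter (fun e => ¬(x e ≠ 1 ∧ x e ≠ -1 ∧ x e ≠ 0)), H e v * mE e
    with hcdef
  have heqS : ∀ v, ∑ e ∈ S, (H e v : ℝ) * x e = (c v : ℝ) := by
    intro v
    have hsplit := Finset.sum_filter_add_sum_filter_not Finset.univ
      (fun e => x e ≠ 1 ∧ x e ≠ -1 ∧ x e ≠ 0) (fun e => (H e v : ℝ) * x e)
    rw [hrow0 v] at hsplit
    have hrest : ∑ e ∈ Finset.univ.filter (fun e => ¬(x e ≠ 1 ∧ x e ≠ -1 ∧ x e ≠ 0)),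
        (H e v : ℝ) * x e
        = ∑ e ∈ Finset.univ.filter (fun e => ¬(x e ≠ 1 ∧ x e ≠ -1 ∧ x e ≠ 0)),
          ((H e v * mE e : ℤ) : ℝ) := by
      refine Finset.sum_congr rfl (fun e he => ?_)
      have heS : e ∉ S := fun hm => (Finset.mem_filter.mp he).2 ((hmemS e).mp hm)
      rw [hoff e heS]; push_cast; ring
    rw [hrest] at hsplit
    rw [hcdef]
    push_cast at hsplit ⊢
    linarith
  have hinjS : ∀ d : E → ℝ, (∀ e, e ∉ S → d e = 0) →
      (∀ v : V, ∑ e ∈ S, (H e v : ℝ) * d e = 0) → ∀ e, d e = 0 := by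
    intro d hsupp hrows
    have hrowsAll : ∀ v, ∑ e, (H e v : ℝ) * d e = 0 := by
      intro v
      rw [← Finset.sum_filter_add_sum_filter_not Finset.univ
        (fun e => x e ≠ 1 ∧ x e ≠ -1 ∧ x e ≠ 0) (fun e => (H e v : ℝ) * d e)]
      have h2 : ∑ e ∈ Finset.univ.filter (fun e => ¬(x e ≠ 1 ∧ x e ≠ -1 ∧ x e ≠ 0)),
          (H e v : ℝ) * d e = 0 := by
        refine Finset.sum_eq_zero (fun e he => ?_)
        have heS : e ∉ S := fun hm => (Finset.mem_filter.mp he).2 ((hmemS e).mp hm)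
        rw [hsupp e heS]; ring
      rw [h2, ← hS, hrows v]
      ring
    by_contra hne
    push_neg at hne
    obtain ⟨e₀, he₀⟩ := hne
    have he₀S : e₀ ∈ S := by
      by_contra h; exact he₀ (hsupp e₀ h)
    have hSne : S.Nonempty := ⟨e₀, he₀S⟩
    set t : ℝ := S.inf' hSne (fun e => min (1 - |x e|) (|x e|) / (1 + |d e|)) with htdef
    have habs : ∀ e ∈ S, |x e| < 1 ∧ 0 < |x e| := by
      intro e he
      rw [hmemS] at he
      constructor
      · refine lt_of_le_of_ne (hcube0 e) (fun h => ?_)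
        rcases (abs_eq (by norm_num : (0:ℝ) ≤ 1)).mp h with h1 | h1
        · exact he.1 h1
        · exact he.2.1 h1
      · exact abs_pos.mpr he.2.2
    have ht : 0 < t := by
      rw [htdef]
      rw [Finset.lt_inf'_iff]
      intro e he
      have := habs e he
      apply div_pos (lt_min (by linarith [this.1]) this.2) (by positivity)
    have hstep : ∀ e, |t * d e| ≤ min (1 - |x e|) (|x e|) := by
      intro e
      by_cases he : e ∈ S
      · have hle : t ≤ min (1 - |x e|) (|x e|) / (1 + |d e|) := Finset.inf'_le _ he
        rw [abs_mul, abs_of_pos ht]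
        have h1 : (0:ℝ) < 1 + |d e| := by positivity
        have hm : 0 ≤ min (1 - |x e|) (|x e|) := by
          have := habs e he
          exact le_min (by linarith [this.1]) (le_of_lt this.2)
        calc t * |d e| ≤ (min (1 - |x e|) (|x e|) / (1 + |d e|)) * |d e| :=
              mul_le_mul_of_nonneg_right hle (abs_nonneg _)
        _ ≤ min (1 - |x e|) (|x e|) := by
              rw [div_mul_eq_mul_div, div_le_iff₀ h1]
              nlinarith [abs_nonneg (d e)]
      · rw [hsupp e he]
        simp only [mul_zero, abs_zero]
        exact le_min (by linarith [abs_nonneg (x e), hcube0 e]) (abs_nonneg _)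
    have hstep1 : ∀ e, |t * d e| ≤ 1 - |x e| := fun e => (hstep e).trans (min_le_left _ _)
    have hstep2 : ∀ e, |t * d e| ≤ |x e| := fun e => (hstep e).trans (min_le_right _ _)
    have hmemP : x + t • d ∈ sgPolytope H := cube_mem H x d t ⟨hrow0, hcube0⟩ hrowsAll hstep1
    have hmemM : x - t • d ∈ sgPolytope H := by
      have : x - t • d = x + (-t) • d := by
        rw [neg_smul, ← sub_eq_add_neg]
      rw [this]
      refine cube_mem H x d (-t) ⟨hrow0, hcube0⟩ hrowsAll (fun e => ?_)
      rw [show -t * d e = -(t * d e) by ring, abs_neg]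
      exact hstep1 e
    have hd0 : d = 0 := by
      rcases hx with hext | ⟨ε, hε, hext⟩
      · exact perturb_zero _ x hext d t ht hmemP hmemM
      · have hxreg : ∀ e, 0 ≤ ε e * x e := hext.1.2
        have hreg : ∀ s : ℝ, |s| ≤ t → ∀ e, 0 ≤ ε e * (x e + s * d e) := by
          intro s hs e
          by_cases he : e ∈ S
          · have hεe : |ε e| = 1 := by rcases hε e with h|h <;> rw [h] <;> norm_num
            have h1 : ε e * x e = |x e| := by
              have := hxreg e
              have h2 : |ε e * x e| = |x e| := by rw [abs_mul, hεe, one_mul]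
              rw [← h2]; exact (abs_of_nonneg this).symm
            have h3 : |s * (ε e * d e)| ≤ t * |d e| := by
              rw [abs_mul, abs_mul, hεe, one_mul]
              apply mul_le_mul hs le_rfl (abs_nonneg _) (le_of_lt ht)
            have h4 : t * |d e| ≤ |x e| := by
              have := hstep2 e
              rw [abs_mul, abs_of_pos ht] at this
              exact this
            have h5 : -(s * (ε e * d e)) ≤ |s * (ε e * d e)| := neg_le_abs _
            have : ε e * (x e + s * d e) = ε e * x e + s * (ε e * d e) := by ring
            rw [this, h1]
            linarith
          · rw [hsupp e he, mul_zero, add_zero]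
            exact hxreg e
        refine perturb_zero _ x hext d t ht ⟨hmemP, ?_⟩ ⟨hmemM, ?_⟩
        · intro e
          have := hreg t (by rw [abs_of_pos ht]) e
          simpa using this
        · intro e
          have := hreg (-t) (by rw [abs_neg, abs_of_pos ht]) e
          simp only [Pi.sub_apply, Pi.smul_apply, smul_eq_mul]
          have heq2 : x e - t * d e = x e + (-t) * d e := by ring
          rw [heq2]
          exact this
    exact he₀ (by rw [hd0]; rfl)
  have htypeS : ∀ e ∈ S, IsCol (H e) := fun e _ => hcol e
  have hcore := core (V := V) (E := E) S.card S H x c le_rfl htypeS hinjS heqS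
  intro e
  by_cases he : e ∈ S
  · exact hcore e he
  · rw [hmemS] at he
    by_cases h1 : x e = 1
    · exact ⟨2, by rw [h1]; norm_num⟩
    · by_cases h2 : x e = -1
      · exact ⟨-2, by rw [h2]; push_cast; norm_num⟩
      · have h3 : x e = 0 := by tauto
        exact ⟨0, by rw [h3]; norm_num⟩
end

section
/- Let A be an n × m real matrix, Z = Null(A) its null space, and for e ∈ [m] let H_e be the coordinate hyperplane {x ∈ ℝ^m : x_e = 0}. Then the map sending a subset S ⊆ [m] to the subspace Z ∩ ⋂_{e∈S}(H_e) induces an isomorphism between the lattice of flats of the induced hyperplane arrangement {H_e ∩ Z : Z ⊄ H_e} in Z and the lattice of closed sets of the chain-group matroid N(Row A), the matroid on [m] whose circuits are the minimal nonempty supports of nonzero vectors in the row space of A. -/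
/-- The rank in the chain-group matroid `N(Row A)` of a set `T` of coordinates:
the dimension of the restriction to the coordinates in `T` of the null space
`Z = Null A`. -/
noncomputable def chainRank {n m : ℕ} (A : Matrix (Fin n) (Fin m) ℝ)
    (T : Set (Fin m)) : ℕ :=
  Module.finrank ℝ ((LinearMap.ker A.mulVecLin).map
    (LinearMap.funLeft ℝ ℝ (Subtype.val : T → Fin m)))

/-- A set `T ⊆ [m]` is closed in the chain-group matroid `N(Row A)`. -/
def ChainClosed {n m : ℕ} (A : Matrix (Fin n) (Fin m) ℝ) (T : Set (Fin m)) : Prop :=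
  ∀ e ∉ T, chainRank A (insert e T) = chainRank A T + 1

/-- A flat of the arrangement induced in `Z = Null A` by the coordinate hyperplanes:
an intersection of `Z` with some of the hyperplanes `{x : x e = 0}`. -/
def IsFlat {n m : ℕ} (A : Matrix (Fin n) (Fin m) ℝ) (W : Set (Fin m → ℝ)) : Prop :=
  ∃ S : Set (Fin m), W = {x | A.mulVec x = 0 ∧ ∀ e ∈ S, x e = 0}

section Aux

open Module LinearMap

private lemma aux_finrank_map_add {V W : Type*} [AddCommGroup V] [Module ℝ V]
    [AddCommGroup W] [Module ℝ W] [FiniteDimensional ℝ V]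
    (p : Submodule ℝ V) (f : V →ₗ[ℝ] W) :
    finrank ℝ (p.map f) + finrank ℝ ↥(p ⊓ ker f) = finrank ℝ p := by
  have h := LinearMap.finrank_range_add_finrank_ker (f.domRestrict p)
  rw [LinearMap.range_domRestrict] at h
  have hker : ker (f.domRestrict p) = Submodule.comap p.subtype (p ⊓ ker f) := by
    rw [LinearMap.domRestrict, LinearMap.ker_comp, Submodule.comap_inf,
      Submodule.comap_subtype_self, top_inf_eq]
  rw [hker, (Submodule.comapSubtypeEquivOfLe (inf_le_left : p ⊓ ker f ≤ p)).finrank_eq] at h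
  exact h

variable {n m : ℕ} (A : Matrix (Fin n) (Fin m) ℝ)

private noncomputable def flatSub (T : Set (Fin m)) : Submodule ℝ (Fin m → ℝ) :=
  LinearMap.ker A.mulVecLin ⊓
    LinearMap.ker (LinearMap.funLeft ℝ ℝ (Subtype.val : T → Fin m))

private lemma mem_flatSub {T : Set (Fin m)} {x : Fin m → ℝ} :
    x ∈ flatSub A T ↔ A.mulVec x = 0 ∧ ∀ e ∈ T, x e = 0 := by
  simp [flatSub, LinearMap.mem_ker, funext_iff, Subtype.forall, Matrix.mulVecLin_apply]

private lemma rank_nullity (T : Set (Fin m)) :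
    chainRank A T + finrank ℝ ↥(flatSub A T) = finrank ℝ ↥(LinearMap.ker A.mulVecLin) :=
  aux_finrank_map_add _ _

private lemma flatSub_insert (e : Fin m) (T : Set (Fin m)) :
    flatSub A (insert e T) = flatSub A T ⊓ LinearMap.ker (LinearMap.proj e) := by
  ext x
  simp only [Submodule.mem_inf, mem_flatSub, LinearMap.mem_ker, LinearMap.proj_apply,
    Set.mem_insert_iff]
  constructor
  · rintro ⟨h1, h2⟩
    exact ⟨⟨h1, fun f hf => h2 f (Or.inr hf)⟩, h2 e (Or.inl rfl)⟩
  · rintro ⟨⟨h1, h2⟩, h3⟩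
    refine ⟨h1, fun f hf => ?_⟩
    rcases hf with rfl | hf
    · exact h3
    · exact h2 f hf

private lemma rankStep (T : Set (Fin m)) (e : Fin m) :
    chainRank A (insert e T) = chainRank A T + 1 ↔ ∃ x ∈ flatSub A T, x e ≠ 0 := by
  have h1 := rank_nullity A T
  have h2 := rank_nullity A (insert e T)
  have h3 := aux_finrank_map_add (flatSub A T) (LinearMap.proj e : (Fin m → ℝ) →ₗ[ℝ] ℝ)
  rw [← flatSub_insert A e T] at h3
  set d := finrank ℝ ((flatSub A T).map (LinearMap.proj e : (Fin m → ℝ) →ₗ[ℝ] ℝ)) with hd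
  have hdle : d ≤ 1 := by
    have := Submodule.finrank_le ((flatSub A T).map (LinearMap.proj e : (Fin m → ℝ) →ₗ[ℝ] ℝ))
    simpa using this
  have hiff : d = 1 ↔ ∃ x ∈ flatSub A T, x e ≠ 0 := by
    rw [show (d = 1) ↔ (d ≠ 0) by omega, hd, Ne, Submodule.finrank_eq_zero]
    constructor
    · intro h
      by_contra hc
      push_neg at hc
      refine h ((Submodule.eq_bot_iff _).mpr ?_)
      rintro y hy
      obtain ⟨x, hx, rfl⟩ := Submodule.mem_map.mp hy
      simpa using hc x hx
    · rintro ⟨x, hx, hxe⟩ h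
      have : (LinearMap.proj e : (Fin m → ℝ) →ₗ[ℝ] ℝ) x ∈
          (flatSub A T).map (LinearMap.proj e : (Fin m → ℝ) →ₗ[ℝ] ℝ) :=
        Submodule.mem_map_of_mem hx
      rw [h] at this
      exact hxe (by simpa using this)
  constructor
  · intro h; exact hiff.mp (by omega)
  · intro h; have := hiff.mpr h; omega

private def clSet (W : Set (Fin m → ℝ)) : Set (Fin m) := {e | ∀ x ∈ W, x e = 0}

private def flatSet (T : Set (Fin m)) : Set (Fin m → ℝ) :=
  {x | A.mulVec x = 0 ∧ ∀ e ∈ T, x e = 0}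

private lemma flatSub_coe (T : Set (Fin m)) : (flatSub A T : Set (Fin m → ℝ)) = flatSet A T :=
  Set.ext fun _ => mem_flatSub A

private lemma flatSet_cl (S : Set (Fin m)) : flatSet A (clSet (flatSet A S)) = flatSet A S := by
  ext x
  constructor
  · rintro ⟨h1, h2⟩
    exact ⟨h1, fun e he => h2 e fun y hy => hy.2 e he⟩
  · intro hx
    exact ⟨hx.1, fun e he => he x hx⟩

private lemma cl_closed (S : Set (Fin m)) : ChainClosed A (clSet (flatSet A S)) := by
  intro e he
  rw [rankStep]
  simp only [clSet, Set.mem_setOf_eq, not_forall] at he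
  obtain ⟨x, hx, hxe⟩ := he
  refine ⟨x, ?_, hxe⟩
  rw [← SetLike.mem_coe, flatSub_coe, flatSet_cl]
  exact hx

private lemma cl_eq_of_closed {T : Set (Fin m)} (hT : ChainClosed A T) :
    clSet (flatSet A T) = T := by
  apply Set.Subset.antisymm
  · intro e he
    by_contra heT
    obtain ⟨x, hx, hxe⟩ := (rankStep A T e).mp (hT e heT)
    exact hxe (he x ((flatSub_coe A T) ▸ hx))
  · intro e he x hx
    exact hx.2 e he

end Aux

/-- The map `S ↦ Z ∩ ⋂_{e ∈ S} H_e` induces an isomorphism between the lattice of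
closed sets of the chain-group matroid `N(Row A)` and the lattice of flats of the
induced coordinate-hyperplane arrangement in `Z = Null A` (flats being ordered by
reverse inclusion). -/
theorem stmt_18 (n m : ℕ) (A : Matrix (Fin n) (Fin m) ℝ) :
    ∃ φ : {T : Set (Fin m) // ChainClosed A T} ≃
        {W : Set (Fin m → ℝ) // IsFlat A W},
      (∀ T, (φ T : Set (Fin m → ℝ))
          = {x | A.mulVec x = 0 ∧ ∀ e ∈ (T : Set (Fin m)), x e = 0}) ∧
      (∀ T₁ T₂ : {T : Set (Fin m) // ChainClosed A T}, (T₁ : Set (Fin m)) ⊆ (T₂ : Set (Fin m)) ↔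
          (φ T₂ : Set (Fin m → ℝ)) ⊆ (φ T₁ : Set (Fin m → ℝ))) := by
  refine ⟨⟨fun T => ⟨flatSet A T.1, T.1, rfl⟩,
    fun W => ⟨clSet W.1, by obtain ⟨S, hS⟩ := W.2; rw [hS]; exact cl_closed A S⟩,
    ?_, ?_⟩, ?_, ?_⟩
  · rintro ⟨T, hT⟩
    exact Subtype.ext (cl_eq_of_closed A hT)
  · rintro ⟨W, S, rfl⟩
    exact Subtype.ext (flatSet_cl A S)
  · rintro ⟨T, hT⟩
    rfl
  · rintro ⟨T₁, hT₁⟩ ⟨T₂, hT₂⟩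
    constructor
    · intro h x hx
      exact ⟨hx.1, fun e he => hx.2 e (h he)⟩
    · intro h e he
      have : e ∈ clSet (flatSet A T₂) := fun x hx => (h hx).2 e he
      rwa [cl_eq_of_closed A hT₂] at this
end

section
/- Let Γ be a finite multigraph with a fixed orientation and let Z ⊆ ℝ^E be its real cycle space. Then the open regions of the arrangement of coordinate hyperplanes restricted to Z (i.e., connected components of Z ∖ ⋃_e {x_e = 0}) are in bijection with the totally cyclic orientations of Γ: the region corresponding to a totally cyclic orientation τ consists of the nonzero flows x ∈ Z that are strictly positive on every edge when expressed in τ. -/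
/-- Head of edge `e` in the orientation `σ` (`σ e = true` keeps the reference
orientation, `σ e = false` reverses it). -/
def oHead {V E : Type} (head tail : E → V) (σ : E → Bool) (e : E) : V :=
  if σ e then head e else tail e

/-- Tail of edge `e` in the orientation `σ`. -/
def oTail {V E : Type} (head tail : E → V) (σ : E → Bool) (e : E) : V :=
  if σ e then tail e else head e

/-- An orientation is totally cyclic if every edge lies on a directed closed walk. -/
def TotallyCyclic {V E : Type} (head tail : E → V) (σ : E → Bool) : Prop :=
  ∀ e : E, ∃ (n : ℕ) (f : ZMod (n + 1) → E),
    (∃ i, f i = e) ∧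
    ∀ i, oHead head tail σ (f i) = oTail head tail σ (f (i + 1))

/-- The real cycle space of the multigraph (as a set). -/
def cycleSpace {V E : Type} [Fintype E] [DecidableEq V] (head tail : E → V) :
    Set (E → ℝ) :=
  {x | ∀ v : V,
    ∑ e ∈ Finset.univ.filter (fun e => head e = v), x e
      = ∑ e ∈ Finset.univ.filter (fun e => tail e = v), x e}

/-- The set of flows strictly positive in the orientation `σ`. -/
def posRegion {V E : Type} [Fintype E] [DecidableEq V] (head tail : E → V)
    (σ : E → Bool) : Set (E → ℝ) :=
  {x ∈ cycleSpace head tail | ∀ e, 0 < if σ e then x e else -x e}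


open Finset

section AuxStmt19
set_option linter.unusedSectionVars false
set_option linter.unnecessarySeqFocus false
variable {V E : Type} [Fintype V] [Fintype E] [DecidableEq V]

def IsWalkAux (H Tl : E → V) : V → List E → V → Prop
  | u, [], v => u = v
  | u, e :: l, v => Tl e = u ∧ IsWalkAux H Tl (H e) l v

lemma isWalkAux_append (H Tl : E → V) (e : E) :
    ∀ (l : List E) (u v : V), IsWalkAux H Tl u l v → Tl e = v →
      IsWalkAux H Tl u (l ++ [e]) (H e) := by
  intro l
  induction l with
  | nil => intro u v h he; exact ⟨by rw [he, h], rfl⟩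
  | cons a l ih => intro u v h he; exact ⟨h.1, ih _ _ h.2 he⟩

lemma reach_walk (H Tl : E → V) {u v : V}
    (h : Relation.ReflTransGen (fun a b => ∃ e, Tl e = a ∧ H e = b) u v) :
    ∃ l, IsWalkAux H Tl u l v := by
  induction h with
  | refl => exact ⟨[], rfl⟩
  | tail _ hstep ih =>
    obtain ⟨l, hl⟩ := ih
    obtain ⟨e, he1, he2⟩ := hstep
    exact ⟨l ++ [e], he2 ▸ isWalkAux_append H Tl e l _ _ hl he1⟩

lemma walk_chain (H Tl : E → V) (d : E) :
    ∀ (l : List E) (u v : V), IsWalkAux H Tl u l v →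
      ∀ k, k + 1 < l.length → H (l.getD k d) = Tl (l.getD (k+1) d) := by
  intro l
  induction l with
  | nil => intro u v _ k hk; simp at hk
  | cons a l ih =>
    intro u v h k hk
    match k with
    | 0 =>
      cases l with
      | nil => simp at hk
      | cons b l' => simpa using h.2.1.symm
    | k + 1 =>
      have := ih _ _ h.2 k (by simpa using hk)
      simpa using this

lemma walk_last (H Tl : E → V) (d : E) :
    ∀ (l : List E) (u v : V), IsWalkAux H Tl u l v → l ≠ [] →
      H (l.getD (l.length - 1) d) = v := by
  intro l
  induction l with
  | nil => intro _ _ _ h; exact absurd rfl h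
  | cons a l ih =>
    intro u v h _
    cases l with
    | nil => exact h.2
    | cons b l' =>
      have := ih _ _ h.2 (by simp)
      simpa using this

lemma flow_reach (H Tl : E → V) (w : E → ℝ) (hw : ∀ e, 0 < w e)
    (cons : ∀ v, ∑ e ∈ univ.filter (fun e => H e = v), w e
      = ∑ e ∈ univ.filter (fun e => Tl e = v), w e) (e₀ : E) :
    Relation.ReflTransGen (fun a b => ∃ e, Tl e = a ∧ H e = b) (H e₀) (Tl e₀) := by
  classical
  by_contra hne
  set R := fun a b => ∃ e, Tl e = a ∧ H e = b with hR
  set A : Finset V := univ.filter (fun v => Relation.ReflTransGen R (H e₀) v) with hA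
  have hHA : H e₀ ∈ A := by
    simp only [hA, mem_filter, mem_univ, true_and]
    exact Relation.ReflTransGen.refl
  have hclosed : ∀ e, Tl e ∈ A → H e ∈ A := by
    intro e he
    simp only [hA, mem_filter, mem_univ, true_and] at he ⊢
    exact he.tail ⟨e, rfl, rfl⟩
  have hsum : ∑ e ∈ univ.filter (fun e => H e ∈ A), w e
      = ∑ e ∈ univ.filter (fun e => Tl e ∈ A), w e := by
    rw [← Finset.sum_fiberwise_eq_sum_filter, ← Finset.sum_fiberwise_eq_sum_filter]
    exact Finset.sum_congr rfl fun v _ => cons v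
  have hsub : univ.filter (fun e => Tl e ∈ A) ⊆ univ.filter (fun e => H e ∈ A) := by
    intro e he
    simp only [mem_filter, mem_univ, true_and] at he ⊢
    exact hclosed e he
  have he₀ : e₀ ∈ univ.filter (fun e => H e ∈ A) := by
    simp only [mem_filter, mem_univ, true_and]; exact hHA
  have he₀' : e₀ ∉ univ.filter (fun e => Tl e ∈ A) := by
    simp only [mem_filter, mem_univ, true_and, hA]
    simpa using hne
  have hlt : ∑ e ∈ univ.filter (fun e => Tl e ∈ A), w e
      < ∑ e ∈ univ.filter (fun e => H e ∈ A), w e :=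
    Finset.sum_lt_sum_of_subset hsub he₀ he₀' (hw e₀) (fun j _ _ => (hw j).le)
  exact absurd hsum (by linarith)

lemma totallyCyclic_of_flow (head tail : E → V) (σ : E → Bool) (w : E → ℝ)
    (hw : ∀ e, 0 < w e)
    (cons : ∀ v, ∑ e ∈ univ.filter (fun e => oHead head tail σ e = v), w e
      = ∑ e ∈ univ.filter (fun e => oTail head tail σ e = v), w e) :
    TotallyCyclic head tail σ := by
  intro e₀
  set H := oHead head tail σ with hH
  set Tl := oTail head tail σ with hTl
  obtain ⟨l, hl⟩ := reach_walk H Tl (flow_reach H Tl w hw cons e₀)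
  set L : List E := e₀ :: l with hLdef
  have hwalk : IsWalkAux H Tl (Tl e₀) L (Tl e₀) := ⟨rfl, hl⟩
  have hlen : L.length = l.length + 1 := by simp [hLdef]
  refine ⟨l.length, fun i => L.getD i.val e₀, ⟨0, by simp [ZMod.val_zero, hLdef]⟩, ?_⟩
  intro i
  have hival : i.val < l.length + 1 := ZMod.val_lt i
  have hval1 : (i + 1 : ZMod (l.length + 1)).val = (i.val + 1) % (l.length + 1) := by
    rw [ZMod.val_add, ZMod.val_one_eq_one_mod, Nat.add_mod i.val 1, Nat.mod_eq_of_lt hival]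
  show H (L.getD i.val e₀) = Tl (L.getD ((i + 1 : ZMod (l.length + 1)).val) e₀)
  rcases Nat.lt_or_ge (i.val + 1) L.length with hlt | hge
  · have hmod : (i + 1 : ZMod (l.length + 1)).val = i.val + 1 := by
      rw [hval1]; exact Nat.mod_eq_of_lt (by omega)
    rw [hmod]
    exact walk_chain H Tl e₀ L _ _ hwalk i.val (by omega)
  · have hiv : i.val = l.length := by omega
    have hmod : (i + 1 : ZMod (l.length + 1)).val = 0 := by
      rw [hval1, hiv]; simp
    rw [hmod]
    have hlast := walk_last H Tl e₀ L _ _ hwalk (by simp [hLdef])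
    rw [hlen] at hlast
    simpa [hLdef, hiv] using hlast

lemma oriented_cons (head tail : E → V) (σ : E → Bool) (x : E → ℝ)
    (hx : x ∈ cycleSpace head tail) (v : V) :
    ∑ e ∈ univ.filter (fun e => oHead head tail σ e = v), (if σ e then x e else -x e)
      = ∑ e ∈ univ.filter (fun e => oTail head tail σ e = v), (if σ e then x e else -x e) := by
  classical
  have h := hx v
  rw [Finset.sum_filter, Finset.sum_filter] at h ⊢
  have key : ∀ e : E,
      (if oHead head tail σ e = v then (if σ e then x e else -x e) else 0)
        - (if oTail head tail σ e = v then (if σ e then x e else -x e) else 0)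
      = (if head e = v then x e else 0) - (if tail e = v then x e else 0) := by
    intro e
    by_cases hσ : σ e <;> simp only [oHead, oTail, hσ, if_true, if_false] <;>
      split_ifs <;> ring
  have h2 : ∑ e : E, ((if oHead head tail σ e = v then (if σ e then x e else -x e) else 0)
      - (if oTail head tail σ e = v then (if σ e then x e else -x e) else 0)) = 0 := by
    rw [Finset.sum_congr rfl (fun e _ => key e), Finset.sum_sub_distrib]
    linarith
  rw [Finset.sum_sub_distrib] at h2
  linarith

lemma sum_mem_cycleSpace {α : Type} (head tail : E → V) (s : Finset α) (y : α → E → ℝ)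
    (hy : ∀ a ∈ s, y a ∈ cycleSpace head tail) :
    (fun e => ∑ a ∈ s, y a e) ∈ cycleSpace head tail := by
  intro v
  show (∑ e ∈ univ.filter (fun e => head e = v), ∑ a ∈ s, y a e)
      = ∑ e ∈ univ.filter (fun e => tail e = v), ∑ a ∈ s, y a e
  rw [Finset.sum_comm]
  conv_rhs => rw [Finset.sum_comm]
  exact Finset.sum_congr rfl fun a ha => hy a ha v

lemma walkFlow_mem [DecidableEq E] (head tail : E → V) (σ : E → Bool) {m : ℕ} (f : ZMod (m+1) → E)
    (hf : ∀ i, oHead head tail σ (f i) = oTail head tail σ (f (i+1))) :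
    (fun e => (if σ e then (1:ℝ) else -1) * ∑ i, (if f i = e then (1:ℝ) else 0))
      ∈ cycleSpace head tail := by
  intro v
  show (∑ e ∈ univ.filter (fun e => head e = v),
        (if σ e then (1:ℝ) else -1) * ∑ i, (if f i = e then (1:ℝ) else 0))
      = ∑ e ∈ univ.filter (fun e => tail e = v),
        (if σ e then (1:ℝ) else -1) * ∑ i, (if f i = e then (1:ℝ) else 0)
  have key : ∀ g : E → V,
      ∑ e ∈ univ.filter (fun e => g e = v),
          ((if σ e then (1:ℝ) else -1) * ∑ i, (if f i = e then (1:ℝ) else 0))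
      = ∑ i, (if g (f i) = v then (if σ (f i) then (1:ℝ) else -1) else 0) := by
    intro g
    rw [Finset.sum_filter]
    have step : ∀ e : E,
        (if g e = v then (if σ e then (1:ℝ) else -1) * ∑ i, (if f i = e then (1:ℝ) else 0) else 0)
        = ∑ i, (if f i = e then (if g e = v then (if σ e then (1:ℝ) else -1) else 0) else 0) := by
      intro e
      by_cases hg : g e = v
      · simp only [if_pos hg, Finset.mul_sum]
        exact Finset.sum_congr rfl fun i _ => by split_ifs <;> ring
      · simp [hg]
    rw [Finset.sum_congr rfl (fun e _ => step e), Finset.sum_comm]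
    refine Finset.sum_congr rfl fun i _ => ?_
    simp [Finset.sum_ite_eq]
  rw [key head, key tail]
  have point : ∀ e : E,
      (if head e = v then (if σ e then (1:ℝ) else -1) else 0)
        - (if tail e = v then (if σ e then (1:ℝ) else -1) else 0)
      = (if oHead head tail σ e = v then (1:ℝ) else 0)
        - (if oTail head tail σ e = v then (1:ℝ) else 0) := by
    intro e
    by_cases hσ : σ e <;> simp only [oHead, oTail, hσ, if_true, if_false] <;>
      split_ifs <;> ring
  have shift : ∑ i, (if oTail head tail σ (f (i+1)) = v then (1:ℝ) else 0)
      = ∑ i, (if oTail head tail σ (f i) = v then (1:ℝ) else 0) :=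
    Fintype.sum_equiv (Equiv.addRight (1 : ZMod (m+1))) _ _ (fun i => rfl)
  have hsub : ∑ i, ((if head (f i) = v then (if σ (f i) then (1:ℝ) else -1) else 0)
      - (if tail (f i) = v then (if σ (f i) then (1:ℝ) else -1) else 0)) = 0 := by
    rw [Finset.sum_congr rfl (fun i _ => point (f i))]
    rw [Finset.sum_sub_distrib]
    have : ∑ i, (if oHead head tail σ (f i) = v then (1:ℝ) else 0)
        = ∑ i, (if oTail head tail σ (f (i+1)) = v then (1:ℝ) else 0) :=
      Finset.sum_congr rfl (fun i _ => by rw [hf i])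
    rw [this, shift]
    ring
  rw [Finset.sum_sub_distrib] at hsub
  linarith

lemma posRegion_nonempty (head tail : E → V) (σ : E → Bool)
    (h : TotallyCyclic head tail σ) : (posRegion head tail σ).Nonempty := by
  classical
  choose n f hmem hcyc using h
  refine ⟨fun e => ∑ a : E,
      (if σ e then (1:ℝ) else -1) * ∑ i, (if f a i = e then (1:ℝ) else 0), ?_, ?_⟩
  · exact sum_mem_cycleSpace head tail univ _
      (fun a _ => walkFlow_mem head tail σ (f a) (hcyc a))
  · intro e
    have heq : (if σ e then (∑ a : E,
        (if σ e then (1:ℝ) else -1) * ∑ i, (if f a i = e then (1:ℝ) else 0))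
        else -(∑ a : E,
        (if σ e then (1:ℝ) else -1) * ∑ i, (if f a i = e then (1:ℝ) else 0)))
        = ∑ a : E, ∑ i, (if f a i = e then (1:ℝ) else 0) := by
      by_cases hσ : σ e
      · simp [hσ]
      · rw [if_neg hσ, ← Finset.sum_neg_distrib]
        refine Finset.sum_congr rfl fun a _ => ?_
        rw [if_neg hσ]; ring
    rw [heq]
    refine Finset.sum_pos' (fun a _ => Finset.sum_nonneg fun i _ => by positivity) ⟨e, mem_univ e, ?_⟩
    obtain ⟨i, hi⟩ := hmem e
    refine Finset.sum_pos' (fun j _ => by positivity) ⟨i, mem_univ i, by simp [hi]⟩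

lemma posRegion_convex (head tail : E → V) (σ : E → Bool) :
    Convex ℝ (posRegion head tail σ) := by
  intro x hx y hy a b ha hb hab
  constructor
  · intro v
    show (∑ e ∈ univ.filter (fun e => head e = v), (a * x e + b * y e))
        = ∑ e ∈ univ.filter (fun e => tail e = v), (a * x e + b * y e)
    rw [Finset.sum_add_distrib, Finset.sum_add_distrib, ← Finset.mul_sum, ← Finset.mul_sum,
      ← Finset.mul_sum, ← Finset.mul_sum, hx.1 v, hy.1 v]
  · intro e
    have h1 := hx.2 e
    have h2 := hy.2 e
    show (0 : ℝ) < if σ e then a * x e + b * y e else -(a * x e + b * y e)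
    by_cases hσ : σ e
    · rw [if_pos hσ] at h1 h2 ⊢
      rcases eq_or_lt_of_le ha with ha' | ha'
      · rw [← ha'] at hab; simp at hab; nlinarith
      · nlinarith
    · rw [if_neg hσ] at h1 h2 ⊢
      rcases eq_or_lt_of_le ha with ha' | ha'
      · rw [← ha'] at hab; simp at hab; nlinarith
      · nlinarith

lemma component_eq (head tail : E → V) (σ : E → Bool) (x : E → ℝ)
    (hx : x ∈ posRegion head tail σ) :
    connectedComponentIn {y ∈ cycleSpace head tail | ∀ e, y e ≠ 0} x
      = posRegion head tail σ := by
  classical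
  set T : Set (E → ℝ) := {y ∈ cycleSpace head tail | ∀ e, y e ≠ 0} with hT
  have hPT : posRegion head tail σ ⊆ T := by
    rintro y ⟨hyc, hyp⟩
    refine ⟨hyc, fun e => ?_⟩
    have := hyp e
    by_cases hσ : σ e
    · rw [if_pos hσ] at this; exact ne_of_gt this
    · rw [if_neg hσ] at this; intro h0; rw [h0] at this; simp at this
  have hxT : x ∈ T := hPT hx
  have hUopen : IsOpen {y : E → ℝ | ∀ e, 0 < if σ e then y e else -y e} := by
    have : {y : E → ℝ | ∀ e, 0 < if σ e then y e else -y e}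
        = ⋂ e, {y : E → ℝ | 0 < if σ e then y e else -y e} := by
      ext y; simp [Set.mem_iInter]
    rw [this]
    refine isOpen_iInter_of_finite fun e => ?_
    by_cases hσ : σ e
    · have heq : {y : E → ℝ | 0 < if σ e then y e else -y e} = {y : E → ℝ | 0 < y e} := by
        ext y; rw [Set.mem_setOf_eq, if_pos hσ, Set.mem_setOf_eq]
      rw [heq]; exact isOpen_lt continuous_const (continuous_apply e)
    · have heq : {y : E → ℝ | 0 < if σ e then y e else -y e} = {y : E → ℝ | y e < 0} := by
        ext y; rw [Set.mem_setOf_eq, if_neg hσ, Set.mem_setOf_eq, neg_pos]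
      rw [heq]; exact isOpen_lt (continuous_apply e) continuous_const
  have hVopen : IsOpen {y : E → ℝ | ∃ e, (if σ e then y e else -y e) < 0} := by
    have : {y : E → ℝ | ∃ e, (if σ e then y e else -y e) < 0}
        = ⋃ e, {y : E → ℝ | (if σ e then y e else -y e) < 0} := by
      ext y; simp [Set.mem_iUnion]
    rw [this]
    refine isOpen_iUnion fun e => ?_
    by_cases hσ : σ e
    · have heq : {y : E → ℝ | (if σ e then y e else -y e) < 0} = {y : E → ℝ | y e < 0} := by
        ext y; rw [Set.mem_setOf_eq, if_pos hσ, Set.mem_setOf_eq]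
      rw [heq]; exact isOpen_lt (continuous_apply e) continuous_const
    · have heq : {y : E → ℝ | (if σ e then y e else -y e) < 0} = {y : E → ℝ | 0 < y e} := by
        ext y; rw [Set.mem_setOf_eq, if_neg hσ, Set.mem_setOf_eq, neg_lt, neg_zero]
      rw [heq]; exact isOpen_lt continuous_const (continuous_apply e)
  have hopen : IsOpen (Subtype.val ⁻¹' posRegion head tail σ : Set T) := by
    have heq : (Subtype.val ⁻¹' posRegion head tail σ : Set T)
        = Subtype.val ⁻¹' {y : E → ℝ | ∀ e, 0 < if σ e then y e else -y e} := by
      ext ⟨y, hy⟩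
      simp only [Set.mem_preimage, Set.mem_setOf_eq]
      exact ⟨fun h => h.2, fun h => ⟨hy.1, h⟩⟩
    rw [heq]
    exact hUopen.preimage continuous_subtype_val
  have hclosed : IsClosed (Subtype.val ⁻¹' posRegion head tail σ : Set T) := by
    rw [← isOpen_compl_iff]
    have heq : (Subtype.val ⁻¹' posRegion head tail σ : Set T)ᶜ
        = Subtype.val ⁻¹' {y : E → ℝ | ∃ e, (if σ e then y e else -y e) < 0} := by
      ext ⟨y, hy⟩
      simp only [Set.mem_compl_iff, Set.mem_preimage, Set.mem_setOf_eq]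
      constructor
      · intro h
        have hnot : ¬ ∀ e, 0 < if σ e then y e else -y e := fun hp => h ⟨hy.1, hp⟩
        push_neg at hnot
        obtain ⟨e, he⟩ := hnot
        refine ⟨e, lt_of_le_of_ne he ?_⟩
        have := hy.2 e
        by_cases hσ : σ e
        · rw [if_pos hσ]; exact this
        · rw [if_neg hσ]; exact neg_ne_zero.mpr this
      · rintro ⟨e, he⟩ hmem
        exact absurd (hmem.2 e) (not_lt.mpr he.le)
    rw [heq]
    exact hVopen.preimage continuous_subtype_val
  apply Set.Subset.antisymm
  · rw [connectedComponentIn_eq_image hxT]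
    have hsub : connectedComponent (⟨x, hxT⟩ : T) ⊆ Subtype.val ⁻¹' posRegion head tail σ :=
      IsClopen.connectedComponent_subset ⟨hclosed, hopen⟩ hx
    exact (Set.image_mono hsub).trans (Set.image_preimage_subset _ _)
  · exact ((posRegion_convex head tail σ).isPreconnected).subset_connectedComponentIn hx hPT

end AuxStmt19

/-- The open regions of the coordinate-hyperplane arrangement restricted to the real
cycle space `Z` (connected components of `Z ∖ ⋃_e {x_e = 0}`) are in bijection with
the totally cyclic orientations: the region of a totally cyclic orientation `σ`
consists of the flows strictly positive in `σ`. -/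
theorem stmt_19 (V E : Type) [Fintype V] [Fintype E] [DecidableEq V]
    (head tail : E → V) :
    (∀ σ : E → Bool, TotallyCyclic head tail σ →
      (posRegion head tail σ).Nonempty ∧
      ∀ x ∈ posRegion head tail σ,
        connectedComponentIn {y ∈ cycleSpace head tail | ∀ e, y e ≠ 0} x
          = posRegion head tail σ) ∧
    (∀ x ∈ {y ∈ cycleSpace head tail | ∀ e, y e ≠ 0},
      ∃! σ : E → Bool, TotallyCyclic head tail σ ∧
        connectedComponentIn {y ∈ cycleSpace head tail | ∀ e, y e ≠ 0} x
          = posRegion head tail σ) := by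
  classical
  constructor
  · intro σ hσ
    exact ⟨posRegion_nonempty head tail σ hσ, fun x hx => component_eq head tail σ x hx⟩
  · rintro x ⟨hxc, hxne⟩
    set σ : E → Bool := fun e => decide (0 < x e) with hσdef
    have hpos : ∀ e, 0 < if σ e then x e else -x e := by
      intro e
      by_cases h : 0 < x e
      · rw [if_pos (by simp [hσdef, h])]; exact h
      · have hlt : x e < 0 := lt_of_le_of_ne (not_lt.mp h) (hxne e)
        rw [if_neg (by simp [hσdef, h])]
        linarith
    have hσ : TotallyCyclic head tail σ :=
      totallyCyclic_of_flow head tail σ (fun e => if σ e then x e else -x e) hpos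
        (fun v => oriented_cons head tail σ x hxc v)
    have hxP : x ∈ posRegion head tail σ := ⟨hxc, hpos⟩
    refine ⟨σ, ⟨hσ, component_eq head tail σ x hxP⟩, ?_⟩
    rintro τ ⟨hτ, hcomp⟩
    have hxT : x ∈ {y ∈ cycleSpace head tail | ∀ e, y e ≠ 0} := ⟨hxc, hxne⟩
    have hxτ : x ∈ posRegion head tail τ := hcomp ▸ mem_connectedComponentIn hxT
    funext e
    have ht := hxτ.2 e
    by_cases h : τ e
    · rw [if_pos h] at ht
      simp [hσdef, h, ht]
    · rw [if_neg h] at ht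
      have : ¬ 0 < x e := by linarith
      simp [hσdef, h, this]
end
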